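/- Let H be a real Hilbert space, r > 0, x̄ ∈ H with ‖x̄‖ = r, and y ∈ H \ {0}. Then 0 ∈ D̂*P_{rB}(x̄)(y) if and only if y = (⟨y, x̄⟩/‖x̄‖²) x̄ with ⟨y, x̄⟩ ≤ 0. -/

import Mathlib

open RealInnerProductSpace Filter Metric

/-- `P` is the metric projection (nearest-point map) onto `C`. -/
def IsMetricProj {H : Type*} [NormedAddCommGroup H] [InnerProductSpace ℝ H]
    (C : Set H) (P : H → H) : Prop :=
  ∀ x : H, P x ∈ C ∧ ∀ w ∈ C, ‖x - P x‖ ≤ ‖x - w‖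

/-- The set `D̂*f(xb)(y)` characterized by the limsup inequality. -/
def coderivSet {H : Type*} [NormedAddCommGroup H] [InnerProductSpace ℝ H]
    (f : H → H) (xb y : H) : Set H :=
  {z | ∀ ε > (0:ℝ), ∃ δ > (0:ℝ), ∀ u : H, u ≠ xb → ‖u - xb‖ < δ →
    (⟪z, u - xb⟫ - ⟪y, f u - f xb⟫) / ‖u - xb‖ < ε}

/-- The (Fréchet) regular normal cone via the limsup inequality. -/
def regNormalCone {E : Type*} [NormedAddCommGroup E] [InnerProductSpace ℝ E]
    (Ω : Set E) (w : E) : Set E :=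
  {v | ∀ ε > (0:ℝ), ∃ δ > (0:ℝ), ∀ u ∈ Ω, u ≠ w → ‖u - w‖ < δ →
    ⟪v, u - w⟫ / ‖u - w‖ < ε}

/-- The Bouligand (contingent) tangent cone. -/
def bouligandTangentCone {E : Type*} [NormedAddCommGroup E] [NormedSpace ℝ E]
    (Ω : Set E) (w : E) : Set E :=
  {z | ∃ t : ℕ → ℝ, ∃ s : ℕ → E, (∀ n, 0 < t n) ∧
    Tendsto t atTop (nhds 0) ∧ Tendsto s atTop (nhds z) ∧ ∀ n, w + t n • s n ∈ Ω}

variable {H : Type*} [NormedAddCommGroup H] [InnerProductSpace ℝ H] [CompleteSpace H]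

/-!
Both sides say that `y` lies in the polar cone of the half-space `{v | ⟪v, x̄⟫ ≤ 0}`, the tangent
cone of the ball at `x̄`. If `0 ∈ D̂*P(x̄)(y)`, then along every direction `v` with `⟪v, x̄⟫ < 0`
the segment `x̄ + t v` stays in the ball for small `t > 0`, where `P` is the identity, so the
limsup condition forces `⟪y, v⟫ ≥ 0`; by continuity this extends to the closed half-space.
Conversely, if `y` is in that polar cone, then `⟪y, P u - x̄⟫ ≥ 0` for every `u` because
`P u - x̄` always points into the half-space, so the quotient in the limsup is nonpositive.
-/

open Topology

section

variable {E : Type*} [NormedAddCommGroup E] [InnerProductSpace ℝ E]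

theorem IsMetricProj.apply_of_mem {C : Set E} {P : E → E} (hP : IsMetricProj C P) {x : E}
    (hx : x ∈ C) : P x = x := by
  have h := (hP x).2 x hx
  rw [sub_self, norm_zero, norm_le_zero_iff, sub_eq_zero] at h
  exact h.symm

theorem inner_sub_nonpos_of_mem_closedBall {r : ℝ} {x w : E} (hx : ‖x‖ = r)
    (hw : w ∈ closedBall (0 : E) r) : ⟪w - x, x⟫ ≤ 0 := by
  rw [mem_closedBall_zero_iff] at hw
  rw [inner_sub_left, real_inner_self_eq_norm_sq]
  nlinarith [real_inner_le_norm w x, norm_nonneg x]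

theorem eventually_add_smul_mem_closedBall {r : ℝ} {x v : E} (hx : ‖x‖ = r)
    (hv : ⟪v, x⟫ < 0) : ∀ᶠ t in 𝓝[>] (0 : ℝ), x + t • v ∈ closedBall (0 : E) r := by
  have hlim : Tendsto (fun t : ℝ => 2 * ⟪v, x⟫ + t * ‖v‖ ^ 2) (𝓝[>] 0) (𝓝 (2 * ⟪v, x⟫)) := by
    have : Continuous fun t : ℝ => 2 * ⟪v, x⟫ + t * ‖v‖ ^ 2 := by fun_prop
    simpa using (this.tendsto 0).mono_left nhdsWithin_le_nhds
  filter_upwards [hlim.eventually_lt_const (by linarith), self_mem_nhdsWithin]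
    with t ht (htpos : 0 < t)
  rw [mem_closedBall_zero_iff]
  -- `‖x + t v‖² = r² + t (2 ⟪v, x⟫ + t ‖v‖²)`
  have hsq : ‖x + t • v‖ ^ 2 ≤ r ^ 2 := by
    rw [norm_add_sq_real, norm_smul, real_inner_smul_right, real_inner_comm, hx,
      Real.norm_eq_abs, abs_of_pos htpos]
    nlinarith
  exact (abs_le_of_sq_le_sq' hsq (hx ▸ norm_nonneg x)).2

theorem forall_inner_nonneg_of_forall_inner_neg {x y : E} (hx : x ≠ 0)
    (h : ∀ v, ⟪v, x⟫ < 0 → 0 ≤ ⟪y, v⟫) (v : E) (hv : ⟪v, x⟫ ≤ 0) : 0 ≤ ⟪y, v⟫ := by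
  have hlim : Tendsto (fun s : ℝ => ⟪y, v - s • x⟫) (𝓝[>] 0) (𝓝 ⟪y, v⟫) := by
    have : Continuous fun s : ℝ => ⟪y, v - s • x⟫ := by fun_prop
    simpa using (this.tendsto 0).mono_left nhdsWithin_le_nhds
  refine ge_of_tendsto hlim ?_
  filter_upwards [self_mem_nhdsWithin] with s (hs : 0 < s)
  apply h
  rw [inner_sub_left, real_inner_smul_left]
  nlinarith [real_inner_self_pos.mpr hx]

theorem forall_inner_nonneg_iff_eq_smul (x y : E) :
    (∀ v, ⟪v, x⟫ ≤ 0 → 0 ≤ ⟪y, v⟫) ↔ y = (⟪y, x⟫ / ‖x‖ ^ 2) • x ∧ ⟪y, x⟫ ≤ 0 := by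
  constructor
  · intro h
    set yp := y - (⟪y, x⟫ / ‖x‖ ^ 2) • x with hyp
    have hypx : ⟪yp, x⟫ = 0 := by
      rw [hyp, inner_sub_left, real_inner_smul_left, real_inner_self_eq_norm_sq,
        div_mul_cancel_of_imp fun hx => by simp [norm_eq_zero.mp (sq_eq_zero_iff.mp hx)], sub_self]
    have hyyp : ⟪y, yp⟫ = ‖yp‖ ^ 2 := by
      conv_lhs => rw [show y = yp + (⟪y, x⟫ / ‖x‖ ^ 2) • x by rw [hyp, sub_add_cancel]]
      rw [inner_add_left, real_inner_smul_left, real_inner_comm yp x, hypx, mul_zero, add_zero,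
        real_inner_self_eq_norm_sq]
    have hyp0 : yp = 0 := by
      have h1 := h yp hypx.le
      have h2 := h (-yp) (by rw [inner_neg_left, hypx, neg_zero])
      rw [inner_neg_right] at h2
      simpa [hyyp] using le_antisymm (by linarith) h1
    refine ⟨sub_eq_zero.mp hyp0, ?_⟩
    have := h (-x) (by rw [inner_neg_left, real_inner_self_eq_norm_sq]; nlinarith)
    rwa [inner_neg_right, neg_nonneg] at this
  · rintro ⟨hy, hyx⟩ v hv
    rw [hy, real_inner_smul_left, real_inner_comm v x]
    exact mul_nonneg_of_nonpos_of_nonpos (div_nonpos_of_nonpos_of_nonneg hyx (by positivity)) hv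

theorem inner_nonneg_of_zero_mem_coderivSet {f : E → E} {xb y v : E}
    (h : (0 : E) ∈ coderivSet f xb y)
    (hv : ∀ᶠ t in 𝓝[>] (0 : ℝ), f (xb + t • v) = f xb + t • v) : 0 ≤ ⟪y, v⟫ := by
  rcases eq_or_ne v 0 with rfl | hv0
  · simp
  by_contra! hneg
  have hvpos : 0 < ‖v‖ := norm_pos_iff.mpr hv0
  obtain ⟨δ, hδ, hq⟩ := h (-⟪y, v⟫ / ‖v‖) (div_pos (neg_pos.mpr hneg) hvpos)
  have hsmall : ∀ᶠ t in 𝓝[>] (0 : ℝ), ‖t • v‖ < δ := by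
    have : Continuous fun t : ℝ => ‖t • v‖ := by fun_prop
    exact ((this.tendsto 0).mono_left nhdsWithin_le_nhds).eventually_lt_const (by simpa using hδ)
  obtain ⟨t, hft, hδt, htpos : 0 < t⟩ := (hv.and (hsmall.and self_mem_nhdsWithin)).exists
  have hq' := hq (xb + t • v) (by simpa using ⟨htpos.ne', hv0⟩) (by simpa using hδt)
  rw [hft, add_sub_cancel_left, add_sub_cancel_left, inner_zero_left, real_inner_smul_right,
    norm_smul, Real.norm_eq_abs, abs_of_pos htpos] at hq'
  have hquot : (0 - t * ⟪y, v⟫) / (t * ‖v‖) = -⟪y, v⟫ / ‖v‖ := by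
    field_simp
    ring
  exact (hquot ▸ hq').false

theorem zero_mem_coderivSet_of_forall_inner_nonneg {f : E → E} {xb y : E}
    (h : ∀ u, 0 ≤ ⟪y, f u - f xb⟫) : (0 : E) ∈ coderivSet f xb y := fun _ hε =>
  ⟨1, one_pos, fun u _ _ =>
    (div_nonpos_of_nonpos_of_nonneg (by simpa using h u) (norm_nonneg _)).trans_lt hε⟩

end

theorem stmt11_general (r : ℝ) (hr : 0 < r) (xb : H) (hx : ‖xb‖ = r) (P : H → H)
    (hP : IsMetricProj (closedBall (0:H) r) P) (y : H) :
    (0:H) ∈ coderivSet P xb y ↔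
      y = (⟪y, xb⟫ / ‖xb‖ ^ 2) • xb ∧ ⟪y, xb⟫ ≤ 0 := by
  have hxb : xb ≠ 0 := norm_ne_zero_iff.mp (hx ▸ hr.ne')
  have hPxb : P xb = xb := hP.apply_of_mem (by simp [hx])
  rw [← forall_inner_nonneg_iff_eq_smul]
  constructor
  · refine fun h => forall_inner_nonneg_of_forall_inner_neg hxb fun v hv =>
      inner_nonneg_of_zero_mem_coderivSet h ?_
    filter_upwards [eventually_add_smul_mem_closedBall hx hv] with t ht
    rw [hP.apply_of_mem ht, hPxb]
  · refine fun h => zero_mem_coderivSet_of_forall_inner_nonneg fun u => h _ ?_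
    rw [hPxb]
    exact inner_sub_nonpos_of_mem_closedBall hx (hP u).1

theorem stmt11 (r : ℝ) (hr : 0 < r) (xb : H) (hx : ‖xb‖ = r) (P : H → H)
    (hP : IsMetricProj (closedBall (0:H) r) P) (y : H) (hy : y ≠ 0) :
    (0:H) ∈ coderivSet P xb y ↔
      y = (⟪y, xb⟫ / ‖xb‖ ^ 2) • xb ∧ ⟪y, xb⟫ ≤ 0 :=
  stmt11_general r hr xb hx P hP y
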